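/- (Lemma 3, case of the paraboloid.) Let n ≥ 2, 0 < α < 2 and 1 ≤ p ≤ n/α. Suppose there exists a constant C > 0 such that ∫_{ℝⁿ} |u(x', x_n)|² V(x', x_n) dx' dx_n ≤ C ‖V‖_{𝓛^{α,p}} ‖f‖_{L²(ℝ^{n-1})}² for every f ∈ L²(ℝ^{n-1}) with f̂ supported in [0,1]^{n-1} and every measurable V : ℝⁿ → [0,∞), where u(x', t) = ∫_{ℝ^{n-1}} e^{-πit|ξ|² + 2πi x'·ξ} f̂(ξ) dξ. Then 1/p ≤ 2(α-1)/(n-1). -/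

import Mathlib

/-! Knapp's example. Let `F` be the indicator of a cube of side `δ = (9(n-1)s)⁻¹` in `[0,1]^{n-1}`
and `V` the indicator of the tube `|x'_j| ≤ s`, `|t| ≤ s²`. On the tube the phase of the
Schrödinger integrand stays within `π/3`, so `|u| ≥ δ^{n-1}/2` there and the left side is
`≳ δ^{2(n-1)} s^{n+1}`, while `‖F‖₂² = δ^{n-1}`. Testing balls of radius `r ≤ s`, `s ≤ r ≤ s²` and
`r ≥ s²` gives `‖V‖_{𝓛^{α,p}} ≲ s^β` with `β = max(α, 2α - (n-1)/p)`. Hence `s² ≲ s^β` for all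
`s ≥ 1`, so `β ≥ 2`, which for `α < 2` is the claim. -/

open Real MeasureTheory ENNReal

/-- The Morrey–Campanato norm
`‖V‖_{𝓛^{α,p}} = sup_{x,r>0} r^α (r^{-n} ∫_{B(x,r)} V^p)^{1/p}` (valued in `ℝ≥0∞`). -/
noncomputable def morreyNorm (n : ℕ) (α p : ℝ) (V : EuclideanSpace ℝ (Fin n) → ℝ) : ℝ≥0∞ :=
  ⨆ (x : EuclideanSpace ℝ (Fin n)) (r : ℝ) (_ : 0 < r),
    ENNReal.ofReal (r ^ α) *
      (ENNReal.ofReal (r ^ (-(n : ℝ))) *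
        ∫⁻ y in Metric.ball x r, ENNReal.ofReal (V y ^ p)) ^ (1/p)

/-- The solution of the free Schrödinger equation with Fourier data `F`:
`u(x',t) = ∫_{ℝ^{n-1}} e^{-πit|ξ|² + 2πi x'·ξ} F(ξ) dξ`. -/
noncomputable def schrodingerExt (n : ℕ) (F : EuclideanSpace ℝ (Fin (n-1)) → ℂ)
    (x : EuclideanSpace ℝ (Fin (n-1))) (t : ℝ) : ℂ :=
  ∫ ξ : EuclideanSpace ℝ (Fin (n-1)),
    Complex.exp (((-(π * t * ‖ξ‖ ^ 2) + 2 * π * (inner ℝ x ξ : ℝ) : ℝ) : ℂ) * Complex.I) * F ξ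

open Set

lemma volume_preimage_ofLp_univ_pi {ι : Type*} [Fintype ι] (I : ι → Set ℝ) :
    volume (WithLp.ofLp ⁻¹' univ.pi I : Set (EuclideanSpace ℝ ι)) = ∏ i, volume (I i) := by
  rw [← volume_pi_pi]
  exact (EuclideanSpace.volume_preserving_symm_measurableEquiv_toLp ι).measure_preimage_equiv _

lemma norm_sq_le_card_mul_sq {ι : Type*} [Fintype ι] {z : EuclideanSpace ℝ ι} {b : ℝ}
    (h : ∀ i, |z i| ≤ b) : ‖z‖ ^ 2 ≤ Fintype.card ι * b ^ 2 := by
  rw [EuclideanSpace.norm_sq_eq]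
  calc ∑ i, ‖z i‖ ^ 2 ≤ ∑ _i : ι, b ^ 2 := Finset.sum_le_sum fun i _ => by
        rw [Real.norm_eq_abs]; exact pow_le_pow_left₀ (abs_nonneg _) (h i) 2
    _ = Fintype.card ι * b ^ 2 := by simp

lemma half_le_cos_of_abs_le {r : ℝ} (h : |r| ≤ π / 3) : 1 / 2 ≤ cos r := by
  rw [← cos_abs, ← cos_pi_div_three]
  exact cos_le_cos_of_nonneg_of_le_pi (abs_nonneg r) (by linarith [pi_pos]) h

lemma abs_schrodingerPhase_le {E : Type*} [NormedAddCommGroup E] [InnerProductSpace ℝ E]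
    {x ξ : E} {t : ℝ} (ht : |t| * ‖ξ‖ ^ 2 ≤ 1 / 9) (hx : ‖x‖ * ‖ξ‖ ≤ 1 / 9) :
    |-(π * t * ‖ξ‖ ^ 2) + 2 * π * inner ℝ x ξ| ≤ π / 3 := by
  have h₁ : |π * t * ‖ξ‖ ^ 2| ≤ π / 9 := by
    rw [abs_mul, abs_mul, abs_of_pos pi_pos, abs_of_nonneg (sq_nonneg ‖ξ‖)]
    nlinarith [pi_pos]
  have h₂ : |2 * π * inner ℝ x ξ| ≤ 2 * π / 9 := by
    rw [abs_mul, abs_of_pos (by positivity)]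
    nlinarith [abs_real_inner_le_norm x ξ, pi_pos]
  calc _ ≤ |-(π * t * ‖ξ‖ ^ 2)| + |2 * π * inner ℝ x ξ| := abs_add_le _ _
    _ ≤ π / 3 := by rw [abs_neg]; linarith

lemma half_measureReal_le_norm_setIntegral_exp {α : Type*} [MeasurableSpace α] {μ : Measure α}
    {s : Set α} {φ : α → ℝ} (hs : MeasurableSet s) (hμs : μ s ≠ ∞)
    (hφ : Measurable φ) (hφs : ∀ ξ ∈ s, |φ ξ| ≤ π / 3) :
    μ.real s / 2 ≤ ‖∫ ξ in s, Complex.exp (φ ξ * Complex.I) ∂μ‖ := by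
  have hint : IntegrableOn (fun ξ => Complex.exp (φ ξ * Complex.I)) s μ :=
    Measure.integrableOn_of_bounded (M := 1) hμs
      (Complex.measurable_ofReal.comp hφ |>.mul_const _ |>.cexp).aestronglyMeasurable
      (ae_of_all _ fun ξ => (Complex.norm_exp_ofReal_mul_I _).le)
  calc μ.real s / 2 = ∫ _ in s, (1 / 2 : ℝ) ∂μ := by simp [div_eq_mul_inv]
    _ ≤ ∫ ξ in s, (Complex.exp (φ ξ * Complex.I)).re ∂μ :=
        setIntegral_mono_on (integrableOn_const hμs) hint.re hs fun ξ hξ => by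
          rw [Complex.exp_ofReal_mul_I_re]; exact half_le_cos_of_abs_le (hφs ξ hξ)
    _ = (∫ ξ in s, Complex.exp (φ ξ * Complex.I) ∂μ).re := integral_re hint
    _ ≤ _ := Complex.re_le_norm _

lemma integral_norm_sq_indicator_one {X : Type*} [MeasurableSpace X] {μ : Measure X}
    {E : Set X} (hE : MeasurableSet E) :
    ∫ ξ, ‖E.indicator (1 : X → ℂ) ξ‖ ^ 2 ∂μ = μ.real E := by
  rw [← integral_indicator_one hE]
  congr 1 with ξ
  by_cases hξ : ξ ∈ E <;> simp [hξ]

lemma schrodingerExt_indicator_one (n : ℕ) {E : Set (EuclideanSpace ℝ (Fin (n - 1)))}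
    (hE : MeasurableSet E) (x : EuclideanSpace ℝ (Fin (n - 1))) (t : ℝ) :
    schrodingerExt n (E.indicator 1) x t =
      ∫ ξ in E,
        Complex.exp ((-(π * t * ‖ξ‖ ^ 2) + 2 * π * inner ℝ x ξ : ℝ) * Complex.I) := by
  rw [schrodingerExt, ← integral_indicator hE]
  congr 1 with ξ
  by_cases hξ : ξ ∈ E <;> simp [hξ]

lemma half_measureReal_le_norm_schrodingerExt_indicator (n : ℕ)
    {E : Set (EuclideanSpace ℝ (Fin (n - 1)))} (hE : MeasurableSet E) (hEfin : volume E ≠ ∞)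
    {x : EuclideanSpace ℝ (Fin (n - 1))} {t : ℝ}
    (hxt : ∀ ξ ∈ E, |t| * ‖ξ‖ ^ 2 ≤ 1 / 9 ∧ ‖x‖ * ‖ξ‖ ≤ 1 / 9) :
    volume.real E / 2 ≤ ‖schrodingerExt n (E.indicator 1) x t‖ := by
  rw [schrodingerExt_indicator_one n hE]
  exact half_measureReal_le_norm_setIntegral_exp hE hEfin (by fun_prop)
    fun ξ hξ => abs_schrodingerPhase_le (hxt ξ hξ).1 (hxt ξ hξ).2

def knappCube (m : ℕ) (δ : ℝ) : Set (EuclideanSpace ℝ (Fin m)) :=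
  WithLp.ofLp ⁻¹' univ.pi fun _ => Icc 0 δ

section KnappCube

variable {m : ℕ} {δ : ℝ}

lemma measurableSet_knappCube : MeasurableSet (knappCube m δ) :=
  WithLp.measurable_ofLp 2 _ (MeasurableSet.univ_pi fun _ => measurableSet_Icc)

lemma volume_knappCube : volume (knappCube m δ) = ENNReal.ofReal δ ^ m := by
  rw [knappCube, volume_preimage_ofLp_univ_pi]
  simp [Real.volume_Icc]

lemma norm_sq_le_of_mem_knappCube {ξ : EuclideanSpace ℝ (Fin m)} (hξ : ξ ∈ knappCube m δ) :
    ‖ξ‖ ^ 2 ≤ m * δ ^ 2 := by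
  simpa using norm_sq_le_card_mul_sq fun i =>
    abs_le.2 ⟨by linarith [(hξ i trivial).1, (hξ i trivial).2], (hξ i trivial).2⟩

lemma mem_Icc_of_mem_knappCube (hδ : δ ≤ 1) {ξ : EuclideanSpace ℝ (Fin m)}
    (hξ : ξ ∈ knappCube m δ) (j : Fin m) : ξ j ∈ Icc (0 : ℝ) 1 :=
  ⟨(hξ j trivial).1, (hξ j trivial).2.trans hδ⟩

end KnappCube

def centredBox {ι : Type*} (L : ι → ℝ) : Set (EuclideanSpace ℝ ι) :=
  WithLp.ofLp ⁻¹' univ.pi fun i => Icc (-L i) (L i)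

section CentredBox

variable {ι : Type*} [Fintype ι] {L : ι → ℝ}

lemma measurableSet_centredBox : MeasurableSet (centredBox L) :=
  WithLp.measurable_ofLp 2 _ (MeasurableSet.univ_pi fun _ => measurableSet_Icc)

lemma volume_centredBox : volume (centredBox L) = ∏ i, ENNReal.ofReal (2 * L i) := by
  simp_rw [centredBox, volume_preimage_ofLp_univ_pi, Real.volume_Icc, sub_neg_eq_add, two_mul]

lemma volume_centredBox_inter_ball_le (x : EuclideanSpace ℝ ι) (r : ℝ) :
    volume (centredBox L ∩ Metric.ball x r) ≤ ∏ i, ENNReal.ofReal (2 * min (L i) r) := by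
  have hsub : centredBox L ∩ Metric.ball x r ⊆
      WithLp.ofLp ⁻¹' univ.pi fun i => Icc (-L i) (L i) ∩ Icc (x i - r) (x i + r) := by
    rintro z ⟨hzL, hzx⟩ i -
    have hzi : |z i - x i| < r := by
      simpa [Real.dist_eq] using (PiLp.dist_apply_le z x i).trans_lt hzx
    exact ⟨hzL i trivial, by constructor <;> linarith [abs_lt.1 hzi]⟩
  refine (measure_mono hsub).trans ?_
  rw [volume_preimage_ofLp_univ_pi]
  gcongr with i
  rw [mul_min_of_nonneg _ _ zero_le_two, ENNReal.ofReal_min]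
  refine le_min ((measure_mono inter_subset_left).trans ?_)
    ((measure_mono inter_subset_right).trans ?_)
  all_goals rw [Real.volume_Icc]; apply le_of_eq; congr 1; ring

end CentredBox

lemma morreyNorm_indicator_one_le {n : ℕ} {α p : ℝ} (hp : 0 < p)
    {T : Set (EuclideanSpace ℝ (Fin n))} (hT : MeasurableSet T) {M : ℝ≥0∞}
    (h : ∀ x r, 0 < r → ENNReal.ofReal (r ^ α) *
      (ENNReal.ofReal (r ^ (-(n : ℝ))) * volume (T ∩ Metric.ball x r)) ^ (1 / p) ≤ M) :
    morreyNorm n α p (T.indicator 1) ≤ M := by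
  refine iSup₂_le fun x r => iSup_le fun hr => ?_
  have hpow : ∀ y, ENNReal.ofReal (T.indicator 1 y ^ p) = T.indicator 1 y := fun y => by
    by_cases hy : y ∈ T <;> simp [hy, zero_rpow hp.ne']
  simp_rw [hpow, lintegral_indicator_one hT, Measure.restrict_apply hT]
  exact h x r hr

/-- The logarithm of `rpow_mul_rpow_min_le`, with `R = log r`, `S = log s`, `u = 1 / p`. -/
lemma mul_add_min_mul_le_mul_max {α u m R S : ℝ} (hα : 0 ≤ α)
    (hαu : α ≤ (m + 1) * u) (hS : 0 ≤ S) :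
    R * α + (-(m + 1) * R + m * min S R + min (2 * S) R) * u ≤ S * max α (2 * α - m * u) := by
  rcases le_total S R with hSR | hRS
  · rcases le_total (2 * S) R with h2SR | hR2S
    · rw [min_eq_left hSR, min_eq_left h2SR]
      nlinarith [le_max_right α (2 * α - m * u)]
    · rw [min_eq_left hSR, min_eq_right hR2S]
      rcases le_total (m * u) α with hmu | hmu
      · nlinarith [le_max_right α (2 * α - m * u)]
      · nlinarith [le_max_left α (2 * α - m * u)]
  · rw [min_eq_right hRS, min_eq_right (by linarith)]
    nlinarith [le_max_left α (2 * α - m * u)]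

lemma rpow_mul_rpow_min_le {α p s r : ℝ} {m : ℕ} (hα : 0 ≤ α) (hp : 0 < p)
    (hαp : α * p ≤ m + 1) (hs : 1 ≤ s) (hr : 0 < r) :
    r ^ α * (r ^ (-((m : ℝ) + 1)) * (min s r ^ m * min (s ^ 2) r)) ^ (1 / p)
      ≤ s ^ max α (2 * α - m / p) := by
  obtain ⟨R, rfl⟩ : ∃ R, r = exp R := ⟨log r, (exp_log hr).symm⟩
  obtain ⟨S, rfl⟩ : ∃ S, s = exp S := ⟨log s, (exp_log (by linarith)).symm⟩
  have hS : 0 ≤ S := by simpa using hs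
  have hαu : α ≤ (m + 1) * (1 / p) := by rw [mul_one_div, le_div_iff₀ hp]; exact hαp
  rw [← exp_nat_mul, ← exp_monotone.map_min, ← exp_monotone.map_min, ← exp_nat_mul]
  simp only [← exp_mul, ← exp_add, exp_le_exp]
  have := mul_add_min_mul_le_mul_max hα hαu hS (R := R)
  convert this using 3 <;> push_cast <;> ring

def spatialPart {m : ℕ} (z : EuclideanSpace ℝ (Fin (m + 1))) : EuclideanSpace ℝ (Fin m) :=
  WithLp.toLp 2 fun j => z (Fin.castSucc j)

def knappTube (m : ℕ) (s : ℝ) : Set (EuclideanSpace ℝ (Fin (m + 1))) :=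
  centredBox (Fin.snoc (fun _ => s) (s ^ 2) : Fin (m + 1) → ℝ)

section KnappTube

variable {m : ℕ} {s : ℝ}

lemma measurableSet_knappTube : MeasurableSet (knappTube m s) := measurableSet_centredBox

lemma volume_knappTube :
    volume (knappTube m s) = ENNReal.ofReal (2 * s) ^ m * ENNReal.ofReal (2 * s ^ 2) := by
  simp [knappTube, volume_centredBox, Fin.prod_univ_castSucc]

lemma volume_knappTube_inter_ball_le (hs : 0 ≤ s) (x : EuclideanSpace ℝ (Fin (m + 1))) {r : ℝ}
    (hr : 0 ≤ r) :
    volume (knappTube m s ∩ Metric.ball x r)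
      ≤ ENNReal.ofReal (2 ^ (m + 1) * (min s r ^ m * min (s ^ 2) r)) := by
  refine (volume_centredBox_inter_ball_le x r).trans_eq ?_
  rw [← ENNReal.ofReal_prod_of_nonneg fun i _ => by
    refine mul_nonneg zero_le_two (le_min ?_ hr)
    induction i using Fin.lastCases <;> simp [hs]]
  simp only [Fin.prod_univ_castSucc, Fin.snoc_castSucc, Fin.snoc_last, Finset.prod_const,
    Finset.card_univ, Fintype.card_fin]
  congr 1
  ring

lemma norm_sq_spatialPart_le_of_mem_knappTube {z : EuclideanSpace ℝ (Fin (m + 1))}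
    (hz : z ∈ knappTube m s) : ‖spatialPart z‖ ^ 2 ≤ m * s ^ 2 := by
  simpa using norm_sq_le_card_mul_sq (z := spatialPart z) (b := s)
    fun j => by simpa [spatialPart] using abs_le.2 (hz (Fin.castSucc j) trivial)

lemma abs_time_le_of_mem_knappTube {z : EuclideanSpace ℝ (Fin (m + 1))}
    (hz : z ∈ knappTube m s) : |z (Fin.last m)| ≤ s ^ 2 := by
  simpa using abs_le.2 (hz (Fin.last m) trivial)

lemma morreyNorm_knappTube_le {α p : ℝ} (hα : 0 ≤ α) (hp : 0 < p) (hαp : α * p ≤ m + 1)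
    (hs : 1 ≤ s) :
    morreyNorm (m + 1) α p ((knappTube m s).indicator 1)
      ≤ ENNReal.ofReal ((2 ^ (m + 1)) ^ (1 / p) * s ^ max α (2 * α - m / p)) := by
  refine morreyNorm_indicator_one_le hp measurableSet_knappTube fun x r hr => ?_
  calc _ ≤ ENNReal.ofReal (r ^ α) * (ENNReal.ofReal (r ^ (-((m : ℝ) + 1))) *
          ENNReal.ofReal (2 ^ (m + 1) * (min s r ^ m * min (s ^ 2) r))) ^ (1 / p) := by
        push_cast
        gcongr
        exact volume_knappTube_inter_ball_le (by linarith) x hr.le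
    _ = ENNReal.ofReal ((2 ^ (m + 1)) ^ (1 / p) *
          (r ^ α * (r ^ (-((m : ℝ) + 1)) * (min s r ^ m * min (s ^ 2) r)) ^ (1 / p))) := by
        rw [← ENNReal.ofReal_mul (by positivity),
          ENNReal.ofReal_rpow_of_nonneg (by positivity) (by positivity),
          ← ENNReal.ofReal_mul (by positivity), mul_left_comm _ (2 ^ (m + 1) : ℝ),
          mul_rpow (by positivity) (by positivity)]
        ring_nf
    _ ≤ _ := by
        gcongr
        exact rpow_mul_rpow_min_le hα hp hαp hs hr

end KnappTube

section Knapp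

variable {m : ℕ} {s δ : ℝ}

lemma phase_bounds_of_mem_knappTube (hs : 0 ≤ s) (hδ : 0 ≤ δ) (hsδ : m * s * δ ≤ 1 / 9)
    {z : EuclideanSpace ℝ (Fin (m + 1))} (hz : z ∈ knappTube m s)
    {ξ : EuclideanSpace ℝ (Fin m)} (hξ : ξ ∈ knappCube m δ) :
    |z (Fin.last m)| * ‖ξ‖ ^ 2 ≤ 1 / 9 ∧ ‖spatialPart z‖ * ‖ξ‖ ≤ 1 / 9 := by
  have hx := norm_sq_spatialPart_le_of_mem_knappTube hz
  have ht := abs_time_le_of_mem_knappTube hz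
  have hξ2 := norm_sq_le_of_mem_knappCube hξ
  have hmsδ : (m * s * δ) ^ 2 ≤ (1 / 9) ^ 2 := by gcongr
  constructor
  · have hm : (m : ℝ) ≤ m ^ 2 := by norm_cast; nlinarith
    calc |z (Fin.last m)| * ‖ξ‖ ^ 2 ≤ s ^ 2 * (m * δ ^ 2) := by gcongr
      _ ≤ (m * s * δ) ^ 2 := by nlinarith [sq_nonneg (s * δ)]
      _ ≤ 1 / 9 := by linarith
  · rw [← pow_le_pow_iff_left₀ (by positivity) (by positivity) two_ne_zero]
    calc _ = _ := mul_pow _ _ 2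
      _ ≤ m * s ^ 2 * (m * δ ^ 2) := by gcongr
      _ = (m * s * δ) ^ 2 := by ring
      _ ≤ _ := hmsδ

lemma lintegral_schrodingerExt_knapp_ge (hs : 0 ≤ s) (hδ : 0 ≤ δ)
    (hsδ : m * s * δ ≤ 1 / 9) :
    ENNReal.ofReal ((δ ^ m / 2) ^ 2) * volume (knappTube m s) ≤
      ∫⁻ z, ‖schrodingerExt (m + 1) ((knappCube m δ).indicator 1) (spatialPart z)
          (z (Fin.last m))‖ₑ ^ 2
        * ENNReal.ofReal ((knappTube m s).indicator 1 z) := by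
  rw [← lintegral_indicator_const measurableSet_knappTube]
  refine lintegral_mono fun z => ?_
  by_cases hz : z ∈ knappTube m s
  · have hu := half_measureReal_le_norm_schrodingerExt_indicator (m + 1) measurableSet_knappCube
      (by simp [volume_knappCube]) fun ξ hξ => phase_bounds_of_mem_knappTube hs hδ hsδ hz hξ
    simp only [measureReal_def, volume_knappCube, toReal_pow, toReal_ofReal hδ] at hu
    simp only [hz, indicator_of_mem, Pi.one_apply, ofReal_one, mul_one]
    rw [ofReal_pow (by positivity), ← ofReal_norm]
    exact pow_le_pow_left' (ofReal_le_ofReal hu) 2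
  · simp [hz]

end Knapp

/-- The hypothesis of the theorem in dimension `n = m + 1`, where `Fin.castLE _` and
`⟨n - 1, _⟩` become `Fin.castSucc` and `Fin.last m`. -/
def SchrodingerMorreyEstimate (m : ℕ) (α p C : ℝ) : Prop :=
  ∀ F : EuclideanSpace ℝ (Fin m) → ℂ, MemLp F 2 volume →
    (∀ ξ, F ξ ≠ 0 → ∀ j, ξ j ∈ Icc (0 : ℝ) 1) →
    ∀ V : EuclideanSpace ℝ (Fin (m + 1)) → ℝ, Measurable V → (∀ x, 0 ≤ V x) →
      ∫⁻ z, ‖schrodingerExt (m + 1) F (spatialPart z) (z (Fin.last m))‖ₑ ^ 2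
          * ENNReal.ofReal (V z)
        ≤ ENNReal.ofReal C * morreyNorm (m + 1) α p V * ENNReal.ofReal (∫ ξ, ‖F ξ‖ ^ 2)

namespace SchrodingerMorreyEstimate

variable {m : ℕ} {α p C : ℝ}

lemma knapp_le (hest : SchrodingerMorreyEstimate m α p C) (hC : 0 ≤ C) (hα : 0 ≤ α)
    (hp : 0 < p) (hαp : α * p ≤ m + 1) {s δ : ℝ} (hs : 1 ≤ s) (hδ : 0 ≤ δ)
    (hδ1 : δ ≤ 1) (hsδ : m * s * δ ≤ 1 / 9) :
    (δ ^ m / 2) ^ 2 * ((2 * s) ^ m * (2 * s ^ 2))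
      ≤ C * ((2 ^ (m + 1)) ^ (1 / p) * s ^ max α (2 * α - m / p)) * δ ^ m := by
  have hFV := hest ((knappCube m δ).indicator 1)
    (memLp_indicator_const 2 measurableSet_knappCube 1 (Or.inr (by simp [volume_knappCube])))
    (fun ξ hξ => mem_Icc_of_mem_knappCube hδ1 (mem_of_indicator_ne_zero hξ))
    ((knappTube m s).indicator 1) (measurable_one.indicator measurableSet_knappTube)
    (indicator_nonneg fun _ _ => zero_le_one)
  rw [integral_norm_sq_indicator_one measurableSet_knappCube, measureReal_def, volume_knappCube,
    toReal_pow, toReal_ofReal hδ] at hFV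
  have hlow := (lintegral_schrodingerExt_knapp_ge (by linarith) hδ hsδ).trans hFV
  grw [morreyNorm_knappTube_le hα hp hαp hs, volume_knappTube] at hlow
  rwa [← ofReal_pow (by positivity), ← ofReal_mul (by positivity),
    ← ofReal_mul (by positivity), ← ofReal_mul hC, ← ofReal_mul (by positivity),
    ofReal_le_ofReal_iff (by positivity)] at hlow

lemma mul_sq_le (hest : SchrodingerMorreyEstimate m α p C) (hC : 0 ≤ C) (hα : 0 ≤ α)
    (hp : 0 < p) (hαp : α * p ≤ m + 1) (hm : 1 ≤ m) {s : ℝ} (hs : 1 ≤ s) :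
    (2 / (9 * m)) ^ m / 2 * s ^ 2
      ≤ C * (2 ^ (m + 1)) ^ (1 / p) * s ^ max α (2 * α - m / p) := by
  have hm' : (1 : ℝ) ≤ m := by exact_mod_cast hm
  obtain ⟨δ, hδ, hδs⟩ : ∃ δ : ℝ, 0 < δ ∧ m * s * δ = 1 / 9 :=
    ⟨(9 * m * s)⁻¹, by positivity, by field_simp⟩
  have hδ1 : δ ≤ 1 := by nlinarith [mul_le_mul hm' hs zero_le_one (by positivity)]
  have h := hest.knapp_le hC hα hp hαp hs hδ.le hδ1 hδs.le
  have hsplit : (δ ^ m / 2) ^ 2 * ((2 * s) ^ m * (2 * s ^ 2))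
      = δ ^ m * ((2 / (9 * m)) ^ m / 2 * s ^ 2) := by
    rw [show 2 / (9 * m) = 2 * s * δ by field_simp; linarith]
    ring
  rw [hsplit, mul_comm _ (δ ^ m), ← mul_assoc C] at h
  exact le_of_mul_le_mul_left h (by positivity)

end SchrodingerMorreyEstimate

lemma two_le_of_forall_mul_sq_le_mul_rpow {K D β : ℝ} (hK : 0 < K)
    (h : ∀ s : ℝ, 1 ≤ s → K * s ^ 2 ≤ D * s ^ β) : 2 ≤ β := by
  by_contra! hβ
  obtain ⟨s, hsD, hs⟩ := (((tendsto_rpow_atTop (sub_pos.2 hβ)).eventually_gt_atTop (D / K)).and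
    (Filter.eventually_ge_atTop 1)).exists
  have hs0 : 0 < s := by linarith
  have hsplit : K * s ^ 2 = K * s ^ (2 - β) * s ^ β := by
    rw [mul_assoc, ← rpow_add hs0, sub_add_cancel, Real.rpow_two]
  have := h s hs
  rw [div_lt_iff₀ hK] at hsD
  nlinarith [rpow_pos_of_pos hs0 β]

/-- **Lemma 3, case of the paraboloid.** Let `n ≥ 2`, `0 < α < 2`,
`1 ≤ p ≤ n/α`. If the weighted extension estimate for the section of the paraboloid
(in Schrödinger form) holds with the Morrey–Campanato norm `𝓛^{α,p}`, then
`1/p ≤ 2(α-1)/(n-1)`. -/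
theorem stmt15 (n : ℕ) (hn : 2 ≤ n) (α p : ℝ) (hα0 : 0 < α) (hα2 : α < 2)
    (hp1 : 1 ≤ p) (hp2 : p ≤ (n : ℝ) / α)
    (h : ∃ C : ℝ, 0 < C ∧
      ∀ F : EuclideanSpace ℝ (Fin (n-1)) → ℂ,
        MemLp F 2 volume →
        (∀ ξ, F ξ ≠ 0 → ∀ j, ξ j ∈ Set.Icc (0 : ℝ) 1) →
      ∀ V : EuclideanSpace ℝ (Fin n) → ℝ, Measurable V → (∀ x, 0 ≤ V x) →
        (∫⁻ z : EuclideanSpace ℝ (Fin n),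
            (‖schrodingerExt n F
                (WithLp.toLp 2 (fun j => z (Fin.castLE (by omega) j)))
                (z ⟨n - 1, by omega⟩)‖₊ : ℝ≥0∞) ^ 2 * ENNReal.ofReal (V z))
          ≤ ENNReal.ofReal C * morreyNorm n α p V *
            ENNReal.ofReal (∫ ξ : EuclideanSpace ℝ (Fin (n-1)), ‖F ξ‖ ^ 2)) :
    1/p ≤ 2 * (α - 1) / ((n : ℝ) - 1) := by
  obtain ⟨m, rfl⟩ : ∃ m, n = m + 1 := ⟨n - 1, by omega⟩
  obtain ⟨C, hC, hest⟩ := h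
  replace hest : SchrodingerMorreyEstimate m α p C := hest
  have hm : (0 : ℝ) < m := by exact_mod_cast (by omega : 0 < m)
  have hp : 0 < p := by linarith
  have hαp : α * p ≤ m + 1 := by
    rw [le_div_iff₀ hα0] at hp2; push_cast at hp2; linarith
  have h2 : 2 ≤ max α (2 * α - m / p) :=
    two_le_of_forall_mul_sq_le_mul_rpow (by positivity)
      fun s hs => hest.mul_sq_le hC.le hα0.le hp hαp (by omega) hs
  have h2' : 2 ≤ 2 * α - m / p := (le_max_iff.1 h2).resolve_left (by linarith)
  rw [Nat.cast_add_one, add_sub_cancel_right, le_div_iff₀ hm, one_div_mul_eq_div]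
  linarith
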